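/- Let v₁, v₂ ∈ ℝ³ be orthonormal and let w₁, w₂ ∈ ℝ³. Define A = w₁ ⊗ v₁ + w₂ ⊗ v₂ and B = v₁ ⊗ v₁ + v₂ ⊗ v₂ (3×3 matrices). Then ‖A‖_F² = ‖w₁‖² + ‖w₂‖², ‖B‖_F² = 2, and ⟨A, A − B⟩_F ≥ ½(‖w₁‖² + ‖w₂‖²) − 1 ≥ ‖w₁‖‖w₂‖ − 1 ≥ √(‖w₁‖²‖w₂‖² − (w₁·w₂)²) − 1. -/

import Mathlib

/-!
For orthonormal `v₁, v₂` the Frobenius product of `a₁ ⊗ v₁ + a₂ ⊗ v₂` and `b₁ ⊗ v₁ + b₂ ⊗ v₂`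
is `⟪a₁, b₁⟫ + ⟪a₂, b₂⟫`. Since `A - B = (w₁ - v₁) ⊗ v₁ + (w₂ - v₂) ⊗ v₂`, this gives
`⟨A, A - B⟩ = ⟪w₁, w₁ - v₁⟫ + ⟪w₂, w₂ - v₂⟫`, and each term is at least `(‖wₖ‖² - 1) / 2` because
`2 ⟪w, w - v⟫ = ‖w‖² - ‖v‖² + ‖w - v‖²`. The remaining two inequalities are AM-GM and
Cauchy-Schwarz.
-/

open RealInnerProductSpace Matrix

section vecMulVec

variable {ι κ : Type*} [Fintype ι] [Fintype κ]

theorem sum_vecMulVec_mul_vecMulVec (a c : EuclideanSpace ℝ ι) (b d : EuclideanSpace ℝ κ) :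
    ∑ i, ∑ j, vecMulVec a b i j * vecMulVec c d i j = ⟪a, c⟫ * ⟪b, d⟫ := by
  simp only [vecMulVec_apply, PiLp.inner_apply, RCLike.inner_apply, conj_trivial,
    Finset.sum_mul_sum]
  exact Finset.sum_congr rfl fun i _ => Finset.sum_congr rfl fun j _ => by ring

theorem sum_vecMulVec_add_mul_vecMulVec_add_of_orthonormal {v₁ v₂ : EuclideanSpace ℝ κ}
    (hv₁ : ‖v₁‖ = 1) (hv₂ : ‖v₂‖ = 1) (hv : ⟪v₁, v₂⟫ = 0) (a₁ a₂ b₁ b₂ : EuclideanSpace ℝ ι) :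
    ∑ i, ∑ j, (vecMulVec a₁ v₁ + vecMulVec a₂ v₂) i j * (vecMulVec b₁ v₁ + vecMulVec b₂ v₂) i j
      = ⟪a₁, b₁⟫ + ⟪a₂, b₂⟫ := by
  simp only [Matrix.add_apply, add_mul, mul_add, Finset.sum_add_distrib,
    sum_vecMulVec_mul_vecMulVec, real_inner_self_eq_norm_sq, hv₁, hv₂, hv, real_inner_comm v₁ v₂]
  ring

end vecMulVec

section InnerProductSpace

variable {E : Type*} [NormedAddCommGroup E] [InnerProductSpace ℝ E]

theorem half_sub_norm_sq_le_inner_sub (v w : E) : (‖w‖ ^ 2 - ‖v‖ ^ 2) / 2 ≤ ⟪w, w - v⟫ := by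
  rw [inner_sub_right, real_inner_self_eq_norm_sq]
  nlinarith [norm_sub_sq_real w v, sq_nonneg ‖w - v‖]

theorem sqrt_gram_det_le_norm_mul_norm (x y : E) :
    √(‖x‖ ^ 2 * ‖y‖ ^ 2 - ⟪x, y⟫ ^ 2) ≤ ‖x‖ * ‖y‖ :=
  Real.sqrt_le_iff.mpr ⟨by positivity, by nlinarith [sq_nonneg ⟪x, y⟫]⟩

end InnerProductSpace

theorem surface_gradient_frobenius_chain
    (v₁ v₂ w₁ w₂ : EuclideanSpace ℝ (Fin 3))
    (hv₁ : ‖v₁‖ = 1) (hv₂ : ‖v₂‖ = 1) (hv : ⟪v₁, v₂⟫ = 0) :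
    let A : Matrix (Fin 3) (Fin 3) ℝ := Matrix.vecMulVec w₁ v₁ + Matrix.vecMulVec w₂ v₂
    let B : Matrix (Fin 3) (Fin 3) ℝ := Matrix.vecMulVec v₁ v₁ + Matrix.vecMulVec v₂ v₂
    (∑ i, ∑ j, (A i j) ^ 2) = ‖w₁‖ ^ 2 + ‖w₂‖ ^ 2 ∧
      (∑ i, ∑ j, (B i j) ^ 2) = 2 ∧
      (∑ i, ∑ j, A i j * (A - B) i j) ≥ (1 / 2) * (‖w₁‖ ^ 2 + ‖w₂‖ ^ 2) - 1 ∧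
      (1 / 2) * (‖w₁‖ ^ 2 + ‖w₂‖ ^ 2) - 1 ≥ ‖w₁‖ * ‖w₂‖ - 1 ∧
      ‖w₁‖ * ‖w₂‖ - 1 ≥
        Real.sqrt (‖w₁‖ ^ 2 * ‖w₂‖ ^ 2 - ⟪w₁, w₂⟫ ^ 2) - 1 := by
  intro A B
  have frobenius := sum_vecMulVec_add_mul_vecMulVec_add_of_orthonormal (ι := Fin 3) hv₁ hv₂ hv
  have hAB : A - B = vecMulVec (w₁ - v₁) v₁ + vecMulVec (w₂ - v₂) v₂ := by
    simp only [A, B, WithLp.ofLp_sub, sub_vecMulVec]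
    abel
  have h₁ := half_sub_norm_sq_le_inner_sub v₁ w₁
  have h₂ := half_sub_norm_sq_le_inner_sub v₂ w₂
  rw [hv₁] at h₁
  rw [hv₂] at h₂
  refine ⟨?_, ?_, ?_, ?_, ?_⟩
  · simp only [sq (A _ _), A, frobenius, real_inner_self_eq_norm_sq]
  · simp only [sq (B _ _), B, frobenius, real_inner_self_eq_norm_sq, hv₁, hv₂]
    norm_num
  · rw [hAB, frobenius]
    linarith
  · linarith [two_mul_le_add_sq ‖w₁‖ ‖w₂‖]
  · linarith [sqrt_gram_det_le_norm_mul_norm w₁ w₂]
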